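/- The bracket on the (n+1)-dimensional complex vector space with basis e_1,...,e_n,x defined by [e_i,e_1] = e_{i+1} (1 ≤ i ≤ n-1), [x,e_1] = -e_1, [e_i,x] = i·e_i (1 ≤ i ≤ n), all other products zero, satisfies the Leibniz identity; moreover this algebra RNF_n is solvable and its derived subalgebra [RNF_n, RNF_n] equals the span of e_1,...,e_n. -/
import Mathlib


/-- Coordinate of `u` at a natural-number index, zero out of range. -/
def cf {m : ℕ} (u : Fin m → ℂ) (j : ℕ) : ℂ := if h : j < m then u ⟨j, h⟩ else 0

/-- The `j`-th coordinate vector of `Fin m → ℂ` (0-based). -/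
def ev (m j : ℕ) : Fin m → ℂ := fun k => if (k : ℕ) = j then 1 else 0

/-- The bracket of `RNF_n` on the basis `e_1, …, e_n, x` (coordinates `0,…,n-1` are
`e_1,…,e_n`, coordinate `n` is `x`): `[e_i,e_1] = e_{i+1}` (`1 ≤ i ≤ n-1`),
`[x,e_1] = -e_1`, `[e_i,x] = i·e_i` (`1 ≤ i ≤ n`), other products zero. -/
def rnfBr (n : ℕ) (u v : Fin (n + 1) → ℂ) : Fin (n + 1) → ℂ := fun k =>
  if (k : ℕ) = 0 then -(cf u n) * cf v 0 + cf u 0 * cf v n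
  else if (k : ℕ) < n then
    cf u ((k : ℕ) - 1) * cf v 0 + (((k : ℕ) : ℂ) + 1) * cf u (k : ℕ) * cf v n
  else 0

/-- `rnfDer n s` is the derived power `RNF_n^{[s+1]}`:
`L^{[1]} = L`, `L^{[s+1]} = [L^{[s]}, L^{[s]}]`. -/
noncomputable def rnfDer (n : ℕ) : ℕ → Submodule ℂ (Fin (n + 1) → ℂ)
  | 0 => ⊤
  | s + 1 => Submodule.span ℂ {z : Fin (n + 1) → ℂ |
      ∃ a ∈ rnfDer n s, ∃ b ∈ rnfDer n s, z = rnfBr n a b}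

lemma cf_br (n : ℕ) (u v : Fin (n+1) → ℂ) {j : ℕ} (hj : j < n + 1) :
    cf (rnfBr n u v) j =
      if j = 0 then -(cf u n) * cf v 0 + cf u 0 * cf v n
      else if j < n then cf u (j-1) * cf v 0 + ((j:ℂ)+1) * cf u j * cf v n
      else 0 := by simp [cf, rnfBr, hj]

lemma cf_ev (m j l : ℕ) (hl : l < m) : cf (ev m j) l = (if l = j then 1 else 0) := by
  simp [cf, ev, hl]

lemma cf_last (n : ℕ) (z : Fin (n+1) → ℂ) : cf z n = z (Fin.last n) := by
  simp [cf, Fin.last]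

lemma cf_zero (n : ℕ) (z : Fin (n+1) → ℂ) : cf z 0 = z 0 := by
  simp [cf]

lemma br_last (n : ℕ) (u v : Fin (n+1) → ℂ) : cf (rnfBr n u v) n = 0 := by
  rw [cf_br n u v (by omega)]
  rcases Nat.eq_zero_or_pos n with h | h
  · subst h; simp
  · simp [Nat.pos_iff_ne_zero.mp h]

lemma leib (n : ℕ) (u v w : Fin (n+1) → ℂ) {k : ℕ} (hk : k < n + 1) :
    cf (rnfBr n u (rnfBr n v w)) k
      = cf (rnfBr n (rnfBr n u v) w) k - cf (rnfBr n (rnfBr n u w) v) k := by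
  have h0 : (0:ℕ) < n + 1 := by omega
  have hn : n < n + 1 := by omega
  have hk1 : k - 1 < n + 1 := by omega
  rw [cf_br n u (rnfBr n v w) hk, cf_br n (rnfBr n u v) w hk, cf_br n (rnfBr n u w) v hk,
      cf_br n v w h0, cf_br n v w hn,
      cf_br n u v h0, cf_br n u v hn, cf_br n u v hk1, cf_br n u v hk,
      cf_br n u w h0, cf_br n u w hn, cf_br n u w hk1, cf_br n u w hk]
  by_cases hn0 : n = 0
  · subst hn0
    have : k = 0 := by omega
    subst this
    simp
  · by_cases hk0 : k = 0
    · subst hk0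
      simp [hn0]
      ring
    · by_cases hkn : k < n
      · by_cases hk1' : k = 1
        · subst hk1'
          simp [hn0, hkn]
          ring
        · have h2 : ¬(k - 1 = 0) := by omega
          have h3 : k - 1 < n := by omega
          simp [hk0, hkn, h2, h3, hn0]
          have hc : ((k - 1 : ℕ) : ℂ) = (k : ℂ) - 1 := by
            push_cast [Nat.cast_sub (by omega : 1 ≤ k)]; ring
          rw [hc]
          ring
      · simp [hk0, hkn]

lemma br_ev_zero (n : ℕ) (hn : 0 < n) :
    rnfBr n (ev (n+1) 0) (ev (n+1) n) = ev (n+1) 0 := by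
  funext x
  obtain ⟨k, hk⟩ := x
  have : rnfBr n (ev (n+1) 0) (ev (n+1) n) ⟨k, hk⟩ = cf (rnfBr n (ev (n+1) 0) (ev (n+1) n)) k := by
    simp [cf, hk]
  rw [this, cf_br _ _ _ hk, cf_ev _ _ _ (by omega : n < n+1), cf_ev _ _ _ (by omega : 0 < n+1),
    cf_ev _ _ _ (by omega : n < n+1), cf_ev _ _ _ (by omega : 0 < n+1),
    cf_ev _ _ _ (by omega : k - 1 < n+1), cf_ev _ _ _ hk]
  show _ = ev (n+1) 0 ⟨k, hk⟩
  simp only [ev]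
  split_ifs <;> first | (exfalso; omega) | norm_num

lemma br_ev_succ (n i : ℕ) (h1 : 1 ≤ i) (h2 : i < n) :
    rnfBr n (ev (n+1) (i-1)) (ev (n+1) 0) = ev (n+1) i := by
  funext x
  obtain ⟨k, hk⟩ := x
  have : rnfBr n (ev (n+1) (i-1)) (ev (n+1) 0) ⟨k, hk⟩
      = cf (rnfBr n (ev (n+1) (i-1)) (ev (n+1) 0)) k := by
    simp [cf, hk]
  rw [this, cf_br _ _ _ hk, cf_ev _ _ _ (by omega : n < n+1), cf_ev _ _ _ (by omega : 0 < n+1),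
    cf_ev _ _ _ (by omega : n < n+1), cf_ev _ _ _ (by omega : 0 < n+1),
    cf_ev _ _ _ (by omega : k - 1 < n+1), cf_ev _ _ _ hk]
  show _ = ev (n+1) i ⟨k, hk⟩
  simp only [ev]
  split_ifs <;> first | (exfalso; omega) | norm_num

lemma mem_span_ev {n : ℕ} (w : Fin (n+1) → ℂ) (hw : w (Fin.last n) = 0) :
    w ∈ Submodule.span ℂ (Set.range fun i : Fin n => ev (n+1) (i:ℕ)) := by
  have hrep : w = ∑ i : Fin n, w i.castSucc • ev (n+1) (i:ℕ) := by
    funext k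
    rw [Finset.sum_apply]
    induction k using Fin.lastCases with
    | last =>
      rw [hw]
      refine (Finset.sum_eq_zero ?_).symm
      intro i _
      have hne : n ≠ (i : ℕ) := by have := i.isLt; omega
      simp [ev, Fin.val_last, hne]
    | cast j =>
      rw [Finset.sum_eq_single j]
      · simp [ev]
      · intro i _ hij
        have hne : (j : ℕ) ≠ (i : ℕ) := fun h => hij (Fin.ext h.symm)
        simp [ev, Fin.coe_castSucc, hne]
      · intro h; exact absurd (Finset.mem_univ j) h
  rw [hrep]
  exact Submodule.sum_mem _ fun i _ =>
    Submodule.smul_mem _ _ (Submodule.subset_span ⟨i, rfl⟩)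

lemma der_one (n : ℕ) :
    rnfDer n 1 = Submodule.span ℂ (Set.range fun i : Fin n => ev (n + 1) (i : ℕ)) := by
  apply le_antisymm
  · show Submodule.span ℂ _ ≤ _
    apply Submodule.span_le.2
    rintro z ⟨a, -, b, -, rfl⟩
    exact mem_span_ev _ (by have := br_last n a b; rwa [cf_last] at this)
  · apply Submodule.span_le.2
    rintro z ⟨i, rfl⟩
    show ev (n+1) (i:ℕ) ∈ rnfDer n 1
    apply Submodule.subset_span
    by_cases hi : (i:ℕ) = 0
    · exact ⟨ev (n+1) 0, Submodule.mem_top, ev (n+1) n, Submodule.mem_top,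
        by rw [hi]; exact (br_ev_zero n (Nat.lt_of_le_of_lt (Nat.zero_le _) i.isLt)).symm⟩
    · exact ⟨ev (n+1) ((i:ℕ)-1), Submodule.mem_top, ev (n+1) 0, Submodule.mem_top,
        (br_ev_succ n i (by omega) i.isLt).symm⟩

lemma br_zero_right (n : ℕ) (u b : Fin (n+1) → ℂ) (hb0 : b 0 = 0) (hbn : b (Fin.last n) = 0) :
    rnfBr n u b = 0 := by
  funext x
  simp [rnfBr, cf_zero, cf_last, hb0, hbn]

lemma der_succ_le {n s : ℕ} (P : Submodule ℂ (Fin (n+1) → ℂ))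
    (h : ∀ a ∈ rnfDer n s, ∀ b ∈ rnfDer n s, rnfBr n a b ∈ P) : rnfDer n (s+1) ≤ P := by
  show Submodule.span ℂ _ ≤ _
  apply Submodule.span_le.2
  rintro z ⟨a, ha, b, hb, rfl⟩
  exact h a ha b hb

lemma der_three (n : ℕ) : rnfDer n 3 = ⊥ := by
  have h1 : rnfDer n 1 ≤ LinearMap.ker (LinearMap.proj (R := ℂ) (Fin.last n)) := by
    apply der_succ_le
    intro a _ b _
    have := br_last n a b
    rw [cf_last] at this
    simpa [LinearMap.mem_ker] using this
  have h2a : rnfDer n 2 ≤ LinearMap.ker (LinearMap.proj (R := ℂ) (Fin.last n)) := by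
    apply der_succ_le
    intro a _ b _
    have := br_last n a b
    rw [cf_last] at this
    simpa [LinearMap.mem_ker] using this
  have h2b : rnfDer n 2 ≤ LinearMap.ker (LinearMap.proj (R := ℂ) (0 : Fin (n+1))) := by
    apply der_succ_le
    intro a ha b hb
    have han : a (Fin.last n) = 0 := by simpa [LinearMap.mem_ker] using h1 ha
    have hbn : b (Fin.last n) = 0 := by simpa [LinearMap.mem_ker] using h1 hb
    simp [LinearMap.mem_ker, rnfBr, cf_zero, cf_last, han, hbn]
  apply le_bot_iff.mp
  apply der_succ_le
  intro a _ b hb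
  have hb0 : b 0 = 0 := by simpa [LinearMap.mem_ker] using h2b hb
  have hbn : b (Fin.last n) = 0 := by simpa [LinearMap.mem_ker] using h2a hb
  rw [br_zero_right n a b hb0 hbn]
  exact Submodule.zero_mem ⊥

/-- `RNF_n` satisfies the Leibniz identity, is solvable, and its derived subalgebra
`[RNF_n, RNF_n]` is the span of `e_1, …, e_n`. -/
theorem rnf_leibniz_solvable_derived (n : ℕ) :
    (∀ u v w : Fin (n + 1) → ℂ,
      rnfBr n u (rnfBr n v w) = rnfBr n (rnfBr n u v) w - rnfBr n (rnfBr n u w) v) ∧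
    (∃ m : ℕ, rnfDer n m = ⊥) ∧
    rnfDer n 1 = Submodule.span ℂ (Set.range fun i : Fin n => ev (n + 1) (i : ℕ)) := by
  refine ⟨?_, ⟨3, der_three n⟩, der_one n⟩
  intro u v w
  funext x
  have h := leib n u v w x.isLt
  simpa [cf, x.isLt] using h
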